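/- arXiv:2402.12619 — 2 statements merged into one kernel-verified Lean document; each statement's English description precedes it below -/
import Mathlib

section
/- Let R be a finite commutative ring with identity, T = Tr(R) the ring of 2×2 upper triangular matrices over R, and u a unit of R. Let A be the matrix with entries a11 = u, a12 = 0, a21 = 0, a22 = 0. Then the set of elements B of T \ Z(T) with B ≠ A and AB = BA is exactly the set of diagonal matrices diag(a,c) with a, c ∈ R that are neither scalar matrices nor equal to A, and this set has cardinality |R|^2 − |R| − 1. -/
open Matrix

/-- The ring of 2×2 upper triangular matrices over `R`. -/
def Tri (R : Type*) [CommRing R] : Subring (Matrix (Fin 2) (Fin 2) R) where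
  carrier := {A | A 1 0 = 0}
  mul_mem' := by
    intro a b ha hb
    simp only [Set.mem_setOf_eq] at *
    simp [Matrix.mul_apply, Fin.sum_univ_two, ha, hb]
  one_mem' := by simp [Matrix.one_apply]
  add_mem' := by
    intro a b ha hb
    simp_all [Matrix.add_apply]
  zero_mem' := by simp
  neg_mem' := by
    intro a ha
    simp_all

/-- The commuting graph of a ring `T`: vertices are the noncentral elements,
two distinct vertices are adjacent iff they commute. -/
def commGraph (T : Type*) [Ring T] : SimpleGraph {x : T // x ∉ Set.center T} where
  Adj a b := a ≠ b ∧ (a : T) * b = b * a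
  symm := by
    constructor
    rintro a b ⟨h1, h2⟩
    exact ⟨h1.symm, h2.symm⟩
  loopless := by constructor; rintro a ⟨h, _⟩; exact h rfl

/-!
The `(0,1)` entry of `A * B - B * A` is `u * B 0 1`, so since `u` is a unit, `B` commutes with `A`
exactly when it is diagonal. A diagonal `diag (a, c)` is central iff `a = c`, so the neighbourhood
is the image of the off-diagonal pairs `(a, c)` other than `(u, 0)` under the injective map `diag`.
-/

namespace Tri

variable {R : Type*} [CommRing R]

@[ext]
lemma ext {B C : Tri R}
    (h00 : (B : Matrix (Fin 2) (Fin 2) R) 0 0 = (C : Matrix (Fin 2) (Fin 2) R) 0 0)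
    (h01 : (B : Matrix (Fin 2) (Fin 2) R) 0 1 = (C : Matrix (Fin 2) (Fin 2) R) 0 1)
    (h11 : (B : Matrix (Fin 2) (Fin 2) R) 1 1 = (C : Matrix (Fin 2) (Fin 2) R) 1 1) :
    B = C := by
  have h10 : (B : Matrix (Fin 2) (Fin 2) R) 1 0 = (C : Matrix (Fin 2) (Fin 2) R) 1 0 :=
    B.2.trans C.2.symm
  ext i j
  fin_cases i <;> fin_cases j <;> assumption

def diag (p : R × R) : Tri R := ⟨!![p.1, 0; 0, p.2], rfl⟩

lemma diag_injective : Function.Injective (diag : R × R → Tri R) := by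
  intro p q h
  have h' := congrArg Subtype.val h
  exact Prod.ext (congrFun (congrFun h' 0) 0) (congrFun (congrFun h' 1) 1)

lemma eq_diag_of_apply_zero_one {B : Tri R} (hB : (B : Matrix (Fin 2) (Fin 2) R) 0 1 = 0) :
    B = diag ((B : Matrix (Fin 2) (Fin 2) R) 0 0, (B : Matrix (Fin 2) (Fin 2) R) 1 1) :=
  Tri.ext rfl hB rfl

lemma exists_eq_diagonal_iff (B : Tri R) :
    (∃ a c : R, (B : Matrix (Fin 2) (Fin 2) R) = !![a, 0; 0, c]) ↔
      (B : Matrix (Fin 2) (Fin 2) R) 0 1 = 0 := by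
  constructor
  · rintro ⟨a, c, hB⟩
    simp [hB]
  · intro hB
    exact ⟨_, _, congrArg Subtype.val (eq_diag_of_apply_zero_one hB)⟩

lemma diag_mul_comm_iff {e : R} (he : IsUnit e) (B : Tri R) :
    diag (e, 0) * B = B * diag (e, 0) ↔ (B : Matrix (Fin 2) (Fin 2) R) 0 1 = 0 := by
  have h10 : (B : Matrix (Fin 2) (Fin 2) R) 1 0 = 0 := B.2
  constructor
  · intro h
    have h01 := congrFun (congrFun (congrArg Subtype.val h) 0) 1
    simp only [Subring.coe_mul, diag, mul_apply, Fin.sum_univ_two] at h01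
    simpa [he.mul_right_eq_zero] using h01
  · intro hB
    ext <;> simp [diag, mul_apply, Fin.sum_univ_two, hB, h10, mul_comm]

lemma mem_center_iff (B : Tri R) :
    B ∈ Set.center (Tri R) ↔ ∃ x : R, (B : Matrix (Fin 2) (Fin 2) R) = x • 1 := by
  rw [Semigroup.mem_center_iff]
  constructor
  · intro h
    have h01 : (B : Matrix (Fin 2) (Fin 2) R) 0 1 = 0 :=
      (diag_mul_comm_iff isUnit_one B).mp (h _)
    have h11 := congrFun (congrFun (congrArg Subtype.val (h ⟨!![0, 1; 0, 0], rfl⟩)) 0) 1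
    simp only [Subring.coe_mul, mul_apply, Fin.sum_univ_two] at h11
    have h10 : (B : Matrix (Fin 2) (Fin 2) R) 1 0 = 0 := B.2
    refine ⟨(B : Matrix (Fin 2) (Fin 2) R) 0 0, ?_⟩
    ext i j
    fin_cases i <;> fin_cases j <;> simp_all
  · rintro ⟨x, hx⟩ C
    apply Subtype.ext
    simp [hx]

lemma diag_mem_center_iff (p : R × R) : diag p ∈ Set.center (Tri R) ↔ p.1 = p.2 := by
  rw [mem_center_iff]
  constructor
  · rintro ⟨x, hx⟩
    have h00 := congrFun (congrFun hx 0) 0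
    have h11 := congrFun (congrFun hx 1) 1
    simp only [diag] at h00 h11
    simp_all
  · intro h
    refine ⟨p.1, ?_⟩
    ext i j
    fin_cases i <;> fin_cases j <;> simp [diag, h]

lemma setOf_commute_diag_eq_image {e : R} (he : IsUnit e) :
    {B : Tri R | diag (e, 0) * B = B * diag (e, 0) ∧ B ≠ diag (e, 0) ∧ B ∉ Set.center (Tri R)} =
      diag '' (Set.univ.offDiag \ {(e, 0)}) := by
  ext B
  constructor
  · rintro ⟨hcomm, hne, hcen⟩
    rw [eq_diag_of_apply_zero_one ((diag_mul_comm_iff he B).mp hcomm)] at hne hcen ⊢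
    rw [diag_mem_center_iff] at hcen
    exact ⟨_, ⟨by simpa using hcen, fun h => hne (congrArg diag h)⟩, rfl⟩
  · rintro ⟨p, ⟨hp, hpe⟩, rfl⟩
    refine ⟨(diag_mul_comm_iff he _).mpr rfl, fun h => hpe (diag_injective h), ?_⟩
    rw [diag_mem_center_iff]
    exact hp.2.2

end Tri

lemma ncard_offDiag_diff_singleton {α : Type*} [Fintype α] {q : α × α} (hq : q.1 ≠ q.2) :
    (Set.univ.offDiag \ {q}).ncard = Fintype.card α ^ 2 - Fintype.card α - 1 := by
  classical
  rw [← Finset.coe_univ, ← Finset.coe_offDiag, ← Finset.coe_singleton, ← Finset.coe_sdiff,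
    Set.ncard_coe_finset, ← Finset.erase_eq, Finset.card_erase_of_mem (by simpa using hq),
    Finset.offDiag_card, Finset.card_univ, sq]

lemma ncard_offDiag_diff_unit {R : Type*} [CommRing R] [Fintype R] (u : Rˣ) :
    (Set.univ.offDiag \ {((u : R), (0 : R))}).ncard = Fintype.card R ^ 2 - Fintype.card R - 1 := by
  rcases subsingleton_or_nontrivial R with hR | hR
  -- `(u, 0)` is off the diagonal unless `R` is the zero ring, where both sides vanish
  · have : Unique R := uniqueOfSubsingleton 0
    rw [Fintype.card_unique, Set.offDiag_eq_empty.mpr Set.subsingleton_of_subsingleton]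
    simp
  · exact ncard_offDiag_diff_singleton u.ne_zero

/-- Theorem 2.2(i): for `A = [[u,0],[0,0]]` with `u` a unit, the neighbourhood
of `A` in the commuting graph of `Tri R` consists exactly of the diagonal
matrices which are neither scalar nor equal to `A`, and it has
`|R|^2 - |R| - 1` elements. -/
theorem neighbourhood_A1 {R : Type*} [CommRing R] [Fintype R] (u : Rˣ) (A : Tri R)
    (hA : (A : Matrix (Fin 2) (Fin 2) R) = !![(u : R), 0; 0, 0]) :
    {B : Tri R | A * B = B * A ∧ B ≠ A ∧ B ∉ Set.center (Tri R)} =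
      {B : Tri R | (∃ a c : R, (B : Matrix (Fin 2) (Fin 2) R) = !![a, 0; 0, c]) ∧
        (¬ ∃ x : R, (B : Matrix (Fin 2) (Fin 2) R) = x • (1 : Matrix (Fin 2) (Fin 2) R)) ∧
        B ≠ A} ∧
    Nat.card {B : Tri R | A * B = B * A ∧ B ≠ A ∧ B ∉ Set.center (Tri R)} =
      Nat.card R ^ 2 - Nat.card R - 1 := by
  obtain rfl : A = Tri.diag ((u : R), 0) := Subtype.ext hA
  refine ⟨?_, ?_⟩
  · ext B
    simp only [Set.mem_ofPred_eq, Tri.diag_mul_comm_iff u.isUnit, Tri.exists_eq_diagonal_iff,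
      Tri.mem_center_iff]
    tauto
  · rw [Tri.setOf_commute_diag_eq_image u.isUnit, Nat.card_image_of_injective Tri.diag_injective,
      Nat.card_coe_set_eq, ncard_offDiag_diff_unit, Nat.card_eq_fintype_card]
end

section
/- Let F be a finite field with q elements and T = Tr(F). Then the commuting graph Γ(T) is disconnected; in fact there exist two vertices with no path between them (the diameter is infinite). -/
open Matrix

/-!
Call an element of `Tri F` *balanced* if its two diagonal entries agree. A balanced element with
`u₁₂ = 0` is scalar, hence central, so a balanced vertex `u` has `u₁₂ ≠ 0`; the `(1,2)` entry of
`u * w = w * u` then reads `u₁₂ * w₂₂ = u₁₂ * w₁₁`, so every neighbour of `u` is balanced too.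
Hence the balanced vertex `E₁₂` cannot be joined to the unbalanced vertex `E₁₁`.
(Indices are 1-based here and 0-based in the code.)
-/

theorem Set.notMem_center_of_not_commute {M : Type*} [Mul M] {a b : M} (h : ¬Commute a b) :
    a ∉ Set.center M :=
  fun ha ↦ h ((Set.mem_center_iff.mp ha).comm b)

namespace Tri

variable {R : Type*} [CommRing R]

theorem apply_one_zero (A : Tri R) : A.1 1 0 = 0 := A.2

theorem mem_center_of_apply_zero_zero_eq_of_apply_zero_one_eq_zero {u : Tri R}
    (hd : u.1 0 0 = u.1 1 1) (h01 : u.1 0 1 = 0) :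
    u ∈ Set.center (Tri R) := by
  refine Semigroup.mem_center_iff.mpr fun g ↦ Subtype.ext ?_
  ext i j
  fin_cases i <;> fin_cases j <;>
    simp [Matrix.mul_apply, apply_one_zero, hd, h01, mul_comm]

theorem apply_zero_zero_eq_of_commute [NoZeroDivisors R] {u w : Tri R}
    (hd : u.1 0 0 = u.1 1 1) (h01 : u.1 0 1 ≠ 0)
    (huw : Commute u w) : w.1 0 0 = w.1 1 1 := by
  have h := congrFun (congrFun (congrArg Subtype.val huw.eq) 0) 1
  simp only [Subring.coe_mul, Matrix.mul_apply, Fin.sum_univ_two, hd] at h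
  exact (mul_left_cancel₀ h01 (by linear_combination h)).symm

def e11 : Tri R := ⟨single 0 0 1, single_apply_of_ne _ _ _ _ _ (by decide)⟩

def e12 : Tri R := ⟨single 0 1 1, single_apply_of_ne _ _ _ _ _ (by decide)⟩

theorem not_commute_e12_e11 [Nontrivial R] : ¬Commute (e12 : Tri R) e11 := by
  intro h
  have := congrFun (congrFun (congrArg Subtype.val h.eq) 0) 1
  simp [e11, e12] at this

end Tri

theorem commGraph_tri_reachable_apply_zero_zero_eq {R : Type*} [CommRing R] [NoZeroDivisors R]
    {u v : {x : Tri R // x ∉ Set.center (Tri R)}} (huv : (commGraph (Tri R)).Reachable u v)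
    (hu : u.1.1 0 0 = u.1.1 1 1) : v.1.1 0 0 = v.1.1 1 1 := by
  rw [SimpleGraph.reachable_iff_reflTransGen] at huv
  induction huv with
  | refl => exact hu
  | @tail w _ _ hadj ih =>
    refine Tri.apply_zero_zero_eq_of_commute ih (fun h01 ↦ ?_) hadj.2
    exact w.2 (Tri.mem_center_of_apply_zero_zero_eq_of_apply_zero_one_eq_zero ih h01)

theorem commGraph_tri_field_disconnected_general {F : Type*} [Field F] :
    ∃ u v : {x : Tri F // x ∉ Set.center (Tri F)},
      ¬ (commGraph (Tri F)).Reachable u v := by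
  have hnc := Tri.not_commute_e12_e11 (R := F)
  refine ⟨⟨Tri.e12, Set.notMem_center_of_not_commute hnc⟩,
    ⟨Tri.e11, Set.notMem_center_of_not_commute fun h ↦ hnc h.symm⟩, fun h ↦ ?_⟩
  simpa [Tri.e11] using commGraph_tri_reachable_apply_zero_zero_eq h (by simp [Tri.e12])

/-- Theorem 2.9(ii): the commuting graph of `Tri F` over a finite field `F`
is disconnected: there are two vertices with no path between them (so the
diameter is infinite). -/
theorem commGraph_tri_field_disconnected {F : Type*} [Field F] [Fintype F] :
    ∃ u v : {x : Tri F // x ∉ Set.center (Tri F)},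
      ¬ (commGraph (Tri F)).Reachable u v :=
  commGraph_tri_field_disconnected_general
end
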